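/- In the vertex-cover reduction graph G' (each node v of a degree-3 graph G gets a heavy pendant neighbor of weight |V|+4|E|, each edge e=(u,v) is replaced by a diamond gadget with nodes U(e),D(e),L(e),R(e), gadgets chained in a fixed edge order between s and t), every weighted-optimal s–t secluded path avoids all original vertices of V(G). -/

import Mathlib

open Finset

/-- Vertices of the reduction graph `G'`: original vertices `v` of `G`, heavy pendant
vertices `v̂`, gadget vertices `(e, c)` with `c = 0,1,2,3` standing for `U(e),D(e),L(e),R(e)`,
and the two endpoints `s` (code `0`) and `t` (code `1`). -/
abbrev V16 (n m : ℕ) := (Fin n ⊕ Fin n) ⊕ ((Fin m × Fin 4) ⊕ Fin 2)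

/-- Original vertex `vᵢ`. -/
def orig {n m : ℕ} (i : Fin n) : V16 n m := Sum.inl (Sum.inl i)
/-- Heavy pendant vertex `v̂ᵢ`. -/
def hat {n m : ℕ} (i : Fin n) : V16 n m := Sum.inl (Sum.inr i)
/-- Gadget vertex: `gad j 0 = U(eⱼ)`, `gad j 1 = D(eⱼ)`, `gad j 2 = L(eⱼ)`, `gad j 3 = R(eⱼ)`. -/
def gad {n m : ℕ} (j : Fin m) (c : Fin 4) : V16 n m := Sum.inr (Sum.inl (j, c))
/-- The source `s`. -/
def s16 {n m : ℕ} : V16 n m := Sum.inr (Sum.inr 0)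
/-- The target `t`. -/
def t16 {n m : ℕ} : V16 n m := Sum.inr (Sum.inr 1)

/-- Adjacency (one orientation suffices; it is symmetrized by `fromRel`):
pendant edges `vᵢ–v̂ᵢ`; gadget edges `u–L(e)`, `R(e)–v`, `L(e)–U(e)`, `L(e)–D(e)`,
`U(e)–R(e)`, `D(e)–R(e)`; chain edges `D(eⱼ)–U(e_{j+1})`; and `s–U(e₁)`, `D(e_m)–t`. -/
def adj16 (n m : ℕ) (edges : Fin m → Fin n × Fin n) : V16 n m → V16 n m → Bool
  | Sum.inl (Sum.inl i), Sum.inl (Sum.inr i') => i == i'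
  | Sum.inl (Sum.inl i), Sum.inr (Sum.inl (j, c)) =>
      (c == 2 && (edges j).1 == i) || (c == 3 && (edges j).2 == i)
  | Sum.inr (Sum.inl (j, c)), Sum.inr (Sum.inl (j', c')) =>
      (j == j' && ((c == 2 && (c' == 0 || c' == 1)) || (c == 0 && c' == 3) ||
        (c == 1 && c' == 3))) ||
      (j'.val == j.val + 1 && c == 1 && c' == 0)
  | Sum.inr (Sum.inr x), Sum.inr (Sum.inl (j, c)) =>
      (x == 0 && j.val == 0 && c == 0) || (x == 1 && j.val + 1 == m && c == 1)
  | _, _ => false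

/-- The reduction graph `G'`. -/
def G16 (n m : ℕ) (edges : Fin m → Fin n × Fin n) : SimpleGraph (V16 n m) :=
  SimpleGraph.fromRel (fun a b => adj16 n m edges a b = true)

instance (n m : ℕ) (edges : Fin m → Fin n × Fin n) : DecidableRel (G16 n m edges).Adj :=
  fun a b => decidable_of_iff _ (SimpleGraph.fromRel_adj _ a b).symm

/-- Node weights: heavy pendant vertices get weight `|V| + 4|E|`, all others weight `1`. -/
def W16 (n m : ℕ) : V16 n m → ℕ
  | Sum.inl (Sum.inr _) => n + 4 * m
  | _ => 1

/-- The closed neighborhood of a finite set of vertices. -/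
def nbhd {V : Type*} [Fintype V] [DecidableEq V] (G : SimpleGraph V) [DecidableRel G.Adj]
    (S : Finset V) : Finset V :=
  S ∪ univ.filter (fun v => ∃ u ∈ S, G.Adj u v)

/-- The weighted exposure cost of a walk: the total weight of the closed neighborhood
of its vertex set. -/
def wcost16 {n m : ℕ} (edges : Fin m → Fin n × Fin n) {a b : V16 n m}
    (p : (G16 n m edges).Walk a b) : ℕ :=
  ∑ u ∈ nbhd (G16 n m edges) p.support.toFinset, W16 n m u

/-! A path through an original vertex `v` exposes its pendant `v̂`, so its cost is at least
`W(v̂) + 3 = |V| + 4|E| + 3` (counting `v̂`, `v`, `s`, `t`). The gadget chain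
`s – U(e₁) – R(e₁) – D(e₁) – U(e₂) – ⋯ – D(eₘ) – t` contains an `s–t` path whose closed
neighbourhood avoids every pendant vertex, and all non-pendant vertices together weigh only
`|V| + 4|E| + 2`. -/

lemma mem_nbhd {V : Type*} [Fintype V] [DecidableEq V] {G : SimpleGraph V} [DecidableRel G.Adj]
    {S : Finset V} {v : V} : v ∈ nbhd G S ↔ v ∈ S ∨ ∃ u ∈ S, G.Adj u v := by
  simp [nbhd]

namespace SimpleGraph

variable {V : Type*} {G : SimpleGraph V}

lemma Reachable.exists_isPath_support_subset [DecidableEq V] {s : Set V} {u v : s}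
    (h : (G.induce s).Reachable u v) :
    ∃ q : G.Walk u v, q.IsPath ∧ ∀ x ∈ q.support, x ∈ s := by
  obtain ⟨w⟩ := h
  refine ⟨(w.map (Embedding.induce s).toHom).bypass, Walk.bypass_isPath _, fun x hx => ?_⟩
  have hx' : x ∈ (w.map (Embedding.induce s).toHom).support :=
    Walk.support_bypass_subset_support _ hx
  rw [Walk.support_map, List.mem_map] at hx'
  obtain ⟨y, -, rfl⟩ := hx'
  exact y.2

end SimpleGraph

open SimpleGraph

variable {n m : ℕ} {edges : Fin m → Fin n × Fin n}

lemma G16_adj_of_adj16 {a b : V16 n m} (hne : a ≠ b) (h : adj16 n m edges a b = true) :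
    (G16 n m edges).Adj a b :=
  (fromRel_adj _ a b).2 ⟨hne, Or.inl h⟩

lemma eq_orig_of_G16_adj_hat {u : V16 n m} {i : Fin n} (h : (G16 n m edges).Adj u (hat i)) :
    u = orig i := by
  obtain ⟨-, h | h⟩ := (fromRel_adj _ u _).1 h <;>
    rcases u with (a | a) | (⟨j, c⟩ | x) <;> simp_all [adj16, hat, orig]

-- The right summand of `V16` holds the gadget vertices together with `s` and `t`.
def chainVertices (n m : ℕ) : Set (V16 n m) := {x | x.isRight}

lemma wcost16_le_of_support_subset_chainVertices {a b : V16 n m}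
    (q : (G16 n m edges).Walk a b) (hq : ∀ x ∈ q.support, x ∈ chainVertices n m) :
    wcost16 edges q ≤ n + 4 * m + 2 := by
  have hsub : nbhd (G16 n m edges) q.support.toFinset ⊆ (univ.image hat)ᶜ := by
    intro u hu
    simp only [mem_compl, mem_image, mem_univ, true_and, not_exists]
    rintro i rfl
    rcases mem_nbhd.1 hu with hi | ⟨w, hw, hadj⟩
    · simpa [chainVertices, hat] using hq _ (List.mem_toFinset.1 hi)
    · simpa [chainVertices, eq_orig_of_G16_adj_hat hadj, orig] using
        hq _ (List.mem_toFinset.1 hw)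
  have hW : ∀ u ∈ (univ.image hat)ᶜ, W16 n m u = 1 := by
    rintro ((a | a) | y) hu <;> simp_all [W16, hat]
  calc wcost16 edges q ≤ ∑ u ∈ (univ.image hat)ᶜ, W16 n m u := sum_le_sum_of_subset hsub
    _ = #(univ.image hat : Finset (V16 n m))ᶜ := by rw [sum_congr rfl hW, card_eq_sum_ones]
    _ = n + 4 * m + 2 := by
      rw [card_compl, card_image_of_injective _ (fun a b h => by simpa [hat] using h)]
      simp only [Fintype.card_sum, Fintype.card_prod, Fintype.card_fin, card_univ]
      omega

abbrev chainGraph (n m : ℕ) (edges : Fin m → Fin n × Fin n) : SimpleGraph (chainVertices n m) :=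
  (G16 n m edges).induce (chainVertices n m)

lemma chainGraph_adj {a b : V16 n m} (ha : a ∈ chainVertices n m)
    (hb : b ∈ chainVertices n m) (hne : a ≠ b) (h : adj16 n m edges a b = true) :
    (chainGraph n m edges).Adj ⟨a, ha⟩ ⟨b, hb⟩ :=
  G16_adj_of_adj16 hne h

lemma chainGraph_reachable_U_D (j : Fin m) :
    (chainGraph n m edges).Reachable ⟨gad j 0, rfl⟩ ⟨gad j 1, rfl⟩ :=
  have hUR : (chainGraph n m edges).Adj ⟨gad j 0, rfl⟩ ⟨gad j 3, rfl⟩ :=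
    chainGraph_adj _ _ (by simp [gad]) (by simp [adj16, gad])
  have hDR : (chainGraph n m edges).Adj ⟨gad j 1, rfl⟩ ⟨gad j 3, rfl⟩ :=
    chainGraph_adj _ _ (by simp [gad]) (by simp [adj16, gad])
  hUR.reachable.trans hDR.symm.reachable

lemma chainGraph_reachable_s_D (k : ℕ) (hk : k < m) :
    (chainGraph n m edges).Reachable ⟨s16, rfl⟩ ⟨gad ⟨k, hk⟩ 1, rfl⟩ := by
  induction k with
  | zero =>
    have hsU : (chainGraph n m edges).Adj ⟨s16, rfl⟩ ⟨gad ⟨0, hk⟩ 0, rfl⟩ :=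
      chainGraph_adj _ _ (by simp [gad, s16]) (by simp [adj16, gad, s16])
    exact hsU.reachable.trans (chainGraph_reachable_U_D _)
  | succ k ih =>
    have hDU : (chainGraph n m edges).Adj ⟨gad ⟨k, by omega⟩ 1, rfl⟩ ⟨gad ⟨k + 1, hk⟩ 0, rfl⟩ :=
      chainGraph_adj _ _ (by simp [gad]) (by simp [adj16, gad])
    exact (ih (by omega)).trans (hDU.reachable.trans (chainGraph_reachable_U_D _))

lemma chainGraph_reachable_s_t (hm : 1 ≤ m) :
    (chainGraph n m edges).Reachable ⟨s16, rfl⟩ ⟨t16, rfl⟩ :=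
  have htD : (chainGraph n m edges).Adj ⟨t16, rfl⟩ ⟨gad ⟨m - 1, by omega⟩ 1, rfl⟩ :=
    chainGraph_adj _ _ (by simp [gad, t16]) (by simp [adj16, gad, t16]; omega)
  (chainGraph_reachable_s_D (m - 1) (by omega)).trans htD.symm.reachable

lemma le_wcost16_of_orig_mem (p : (G16 n m edges).Walk s16 t16) {i : Fin n}
    (hi : orig i ∈ p.support) : n + 4 * m + 3 ≤ wcost16 edges p := by
  have hsub : {hat i, orig i, s16, t16} ⊆ nbhd (G16 n m edges) p.support.toFinset := by
    have hhat : (G16 n m edges).Adj (orig i) (hat i) :=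
      G16_adj_of_adj16 (by simp [orig, hat]) (by simp [adj16, orig, hat])
    intro x hx
    simp only [mem_insert, mem_singleton] at hx
    rcases hx with rfl | rfl | rfl | rfl <;> rw [mem_nbhd, List.mem_toFinset]
    exacts [Or.inr ⟨orig i, List.mem_toFinset.2 hi, hhat⟩, Or.inl hi,
      Or.inl p.start_mem_support, Or.inl p.end_mem_support]
  calc n + 4 * m + 3 = ∑ u ∈ {hat i, orig i, s16, t16}, W16 n m u := by
        rw [sum_insert (by simp [hat, orig, s16, t16]), sum_insert (by simp [orig, s16, t16]),
          sum_pair (by simp [s16, t16])]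
        rfl
    _ ≤ wcost16 edges p := sum_le_sum_of_subset hsub

theorem optimal_path_avoids_originals (n m : ℕ) (hm : 1 ≤ m)
    (edges : Fin m → Fin n × Fin n)
    (p : (G16 n m edges).Walk s16 t16)
    (hopt : ∀ q : (G16 n m edges).Walk s16 t16, q.IsPath →
      wcost16 edges p ≤ wcost16 edges q) :
    ∀ i : Fin n, orig i ∉ p.support := by
  intro i hi
  obtain ⟨q, hq, hq_chain⟩ :=
    (chainGraph_reachable_s_t (edges := edges) hm).exists_isPath_support_subset
  have hp_ge := le_wcost16_of_orig_mem p hi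
  have hq_le := wcost16_le_of_support_subset_chainVertices q hq_chain
  have hpq := hopt q hq
  omega
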